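/- arXiv:1509.07828 — 2 statements merged into one kernel-verified Lean document; each statement's English description precedes it below -/
import Mathlib

section
/- Let A be a ring, M an A-module with projective resolution F, and p: Σ^{-d}F → F a chain map representing a class in Ext^d_A(M,M) for some d ≥ 1. Then the mapping-cone construction yields a short exact sequence of A-modules 0 → M → K_p → Ω^{d−1}_A(M) → 0, where K_p is the cokernel of the map F_d ⊕ F_1 → F_{d−1} ⊕ F_0 given by the matrix ((−∂_d, 0), (p, ∂_1)). -/
/-! Write `K_p` as `(F_{d-1} × F_0) ⧸ range φ` with `φ (a, b) = (-∂ a, p a + ∂ b)`. The second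
coordinate induces `M ≅ F_0 ⧸ ∂F_1 → K_p` and the first one `K_p → F_{d-1} ⧸ ∂F_d ≅ Ω^{d-1}_A(M)`;
exactness in the middle and surjectivity are formal. Injectivity is the vanishing of the connecting
map of the snake lemma: a cycle `a ∈ ker ∂_d = ∂F_{d+1}` is sent by `p` to a boundary, since
`p ∂ = ∂ p`. -/

set_option linter.unnecessarySimpa false
set_option maxHeartbeats 1000000

open CategoryTheory IsLocalRing

/-- The `i`-th Ext module of `M` and `N` over `S`. -/
noncomputable def ExtType (S : Type) [CommRing S] (M N : Type) [AddCommGroup M] [Module S M]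
    [AddCommGroup N] [Module S N] (i : ℕ) : Type _ :=
  ((Ext S (ModuleCat.{0} S) i).obj (Opposite.op (ModuleCat.of S M))).obj (ModuleCat.of S N)

noncomputable instance (S : Type) [CommRing S] (M N : Type) [AddCommGroup M] [Module S M]
    [AddCommGroup N] [Module S N] (i : ℕ) : AddCommGroup (ExtType S M N i) := by
  unfold ExtType; infer_instance

noncomputable instance (S : Type) [CommRing S] (M N : Type) [AddCommGroup M] [Module S M]
    [AddCommGroup N] [Module S N] (i : ℕ) : Module S (ExtType S M N i) := by
  unfold ExtType; infer_instance

/-- `M` has projective dimension at most `p` over `S`, expressed via vanishing of `Ext`. -/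
def ProjDimLE (S : Type) [CommRing S] (M : Type) [AddCommGroup M] [Module S M] (p : ℕ) : Prop :=
  ∀ (N : Type) [AddCommGroup N] [Module S N], ∀ i : ℕ, p < i → Subsingleton (ExtType S M N i)

/-- The `Q ⧸ J`-module structure on a `Q`-module annihilated by `J`. -/
noncomputable def modOver (Q : Type) [CommRing Q] (J : Ideal Q) (M : Type) [AddCommGroup M]
    [Module Q M] (h : ∀ x ∈ J, ∀ m : M, x • m = 0) : Module (Q ⧸ J) M :=
  Module.IsTorsionBySet.module (fun m a => h a.1 a.2 m)

theorem annOfSpan {Q : Type} [CommRing Q] {f : Q} {M : Type} [AddCommGroup M] [Module Q M]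
    (h : ∀ m : M, f • m = 0) : ∀ x ∈ Ideal.span {f}, ∀ m : M, x • m = 0 := by
  intro x hx m
  obtain ⟨c, rfl⟩ := Ideal.mem_span_singleton'.mp hx
  rw [mul_smul, h m, smul_zero]

/-- The support variety of the pair `(M, N)` of modules over `R = Q ⧸ I`, realized as the
subset of `V = I/𝔫I` consisting of `0` together with the classes `f̄` of elements `f ∈ I` such
that `Ext^i_{Q/(f)}(M, N) ≠ 0` for infinitely many `i`. -/
noncomputable def SuppVar (Q : Type) [CommRing Q] [IsLocalRing Q] (I : Ideal Q)
    (M N : Type) [AddCommGroup M] [Module Q M] [AddCommGroup N] [Module Q N]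
    (hM : ∀ x ∈ I, ∀ m : M, x • m = 0) (hN : ∀ x ∈ I, ∀ n : N, x • n = 0) :
    Set (I ⧸ (maximalIdeal Q • ⊤ : Submodule Q I)) :=
  {0} ∪ {v | ∃ f : I, Submodule.Quotient.mk f = v ∧
    letI := modOver Q (Ideal.span {(f : Q)}) M
      (fun x hx m => hM x (Ideal.span_le.mpr (by simpa using f.2) hx) m)
    letI := modOver Q (Ideal.span {(f : Q)}) N
      (fun x hx n => hN x (Ideal.span_le.mpr (by simpa using f.2) hx) n)
    {i : ℕ | Nontrivial (ExtType (Q ⧸ Ideal.span {(f : Q)}) M N i)}.Infinite}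

/-- `K` is a (first) syzygy of `M` over `S`. -/
def IsSyzygy (S : Type) [CommRing S] (M K : ModuleCat.{0} S) : Prop :=
  ∃ (F : ModuleCat.{0} S) (f : F ⟶ M), Module.Free S F ∧ Function.Surjective f ∧
    Nonempty (K ≃ₗ[S] LinearMap.ker f.hom)

/-- `K` is an `n`-th syzygy of `M` over `S`. -/
def IsNthSyzygy (S : Type) [CommRing S] : ℕ → ModuleCat.{0} S → ModuleCat.{0} S → Prop
  | 0, M, K => Nonempty (K ≃ₗ[S] M)
  | n + 1, M, K => ∃ X : ModuleCat.{0} S, IsSyzygy S M X ∧ IsNthSyzygy S n X K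

/-- `K` is a minimal (first) syzygy of `M` over the local ring `S`. -/
def IsMinSyzygy (S : Type) [CommRing S] [IsLocalRing S] (M K : ModuleCat.{0} S) : Prop :=
  ∃ (F : ModuleCat.{0} S) (f : F ⟶ M), Module.Free S F ∧ Module.Finite S F ∧
    Function.Surjective f ∧ (LinearMap.ker f.hom : Submodule S F) ≤ maximalIdeal S • ⊤ ∧
    Nonempty (K ≃ₗ[S] LinearMap.ker f.hom)

/-- `K` is an `n`-th minimal syzygy of `M` over the local ring `S`. -/
def IsNthMinSyzygy (S : Type) [CommRing S] [IsLocalRing S] :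
    ℕ → ModuleCat.{0} S → ModuleCat.{0} S → Prop
  | 0, M, K => Nonempty (K ≃ₗ[S] M)
  | n + 1, M, K => ∃ X : ModuleCat.{0} S, IsMinSyzygy S M X ∧ IsNthMinSyzygy S n X K

/-- A local ring is regular iff it is Noetherian and its maximal ideal is generated by a
regular sequence. -/
def IsRegularLocal (Q : Type) [CommRing Q] [IsLocalRing Q] : Prop :=
  IsNoetherianRing Q ∧ ∃ rs : List Q, RingTheory.Sequence.IsRegular Q rs ∧
    Ideal.span {x | x ∈ rs} = maximalIdeal Q

/-- A local ring is Cohen–Macaulay iff it is Noetherian and there is a regular sequence in the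
maximal ideal whose length is the Krull dimension. -/
def IsCohenMacaulayLocal (A : Type) [CommRing A] [IsLocalRing A] : Prop :=
  IsNoetherianRing A ∧ ∃ rs : List A, (∀ x ∈ rs, x ∈ maximalIdeal A) ∧
    RingTheory.Sequence.IsRegular A rs ∧ (rs.length : WithBot (WithTop ℕ)) = ringKrullDim A

namespace LinearMap

variable {A X₁ X₂ Y₁ Y₂ : Type*} [Ring A] [AddCommGroup X₁] [Module A X₁] [AddCommGroup X₂]
  [Module A X₂] [AddCommGroup Y₁] [Module A Y₁] [AddCommGroup Y₂] [Module A Y₂]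
  (u : X₁ →ₗ[A] Y₁) (p : X₁ →ₗ[A] Y₂) (v : X₂ →ₗ[A] Y₂)

def triangular : X₁ × X₂ →ₗ[A] Y₁ × Y₂ := (u.prod p).coprod ((0 : X₂ →ₗ[A] Y₁).prod v)

@[simp]
theorem triangular_apply (x : X₁ × X₂) : triangular u p v x = (u x.1, p x.1 + v x.2) := by
  simp [triangular]

theorem range_le_comap_inr_range_triangular :
    range v ≤ (range (triangular u p v)).comap (inr A Y₁ Y₂) := by
  rintro _ ⟨x, rfl⟩
  exact ⟨(0, x), by simp⟩

noncomputable def cokernelInr : (Y₂ ⧸ range v) →ₗ[A] (Y₁ × Y₂) ⧸ range (triangular u p v) :=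
  (range v).mapQ _ (inr A Y₁ Y₂) (range_le_comap_inr_range_triangular u p v)

@[simp]
theorem cokernelInr_mk (y : Y₂) :
    cokernelInr u p v (Submodule.Quotient.mk y) = Submodule.Quotient.mk (0, y) :=
  rfl

theorem cokernelInr_injective (h : ∀ x, u x = 0 → p x ∈ range v) :
    Function.Injective (cokernelInr u p v) := by
  rw [← ker_eq_bot, eq_bot_iff]
  rintro y hy
  obtain ⟨y, rfl⟩ := Submodule.Quotient.mk_surjective _ y
  obtain ⟨⟨a, b⟩, hab⟩ := (Submodule.Quotient.mk_eq_zero _).1 hy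
  simp only [triangular_apply, inr_apply, Prod.mk.injEq] at hab
  obtain ⟨c, hc⟩ := h a hab.1
  exact (Submodule.Quotient.mk_eq_zero _).2 ⟨c + b, by rw [map_add, hc, hab.2]⟩

variable {N : Type*} [AddCommGroup N] [Module A N] {c : Y₁ →ₗ[A] N}

theorem range_triangular_le_ker_comp_fst (hc : c ∘ₗ u = 0) :
    range (triangular u p v) ≤ ker (c ∘ₗ fst A Y₁ Y₂) := by
  rintro _ ⟨x, rfl⟩
  simpa using congr($hc x.1)

noncomputable def cokernelFst (hc : c ∘ₗ u = 0) : ((Y₁ × Y₂) ⧸ range (triangular u p v)) →ₗ[A] N :=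
  (range (triangular u p v)).liftQ _ (range_triangular_le_ker_comp_fst u p v hc)

@[simp]
theorem cokernelFst_mk (hc : c ∘ₗ u = 0) (y : Y₁ × Y₂) :
    cokernelFst u p v hc (Submodule.Quotient.mk y) = c y.1 :=
  rfl

theorem cokernelFst_surjective (hc : c ∘ₗ u = 0) (hsurj : Function.Surjective c) :
    Function.Surjective (cokernelFst u p v hc) := by
  intro n
  obtain ⟨y, rfl⟩ := hsurj n
  exact ⟨Submodule.Quotient.mk (y, 0), rfl⟩

theorem exact_cokernelInr_cokernelFst (huc : Function.Exact u c) :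
    Function.Exact (cokernelInr u p v) (cokernelFst u p v huc.linearMap_comp_eq_zero) := by
  refine Function.Exact.of_comp_of_mem_range ?_ ?_
  · ext y
    obtain ⟨y, rfl⟩ := Submodule.Quotient.mk_surjective _ y
    simp
  · intro y hy
    obtain ⟨⟨y₁, y₂⟩, rfl⟩ := Submodule.Quotient.mk_surjective _ y
    obtain ⟨x, rfl⟩ := (huc y₁).1 hy
    refine ⟨Submodule.Quotient.mk (y₂ - p x), ?_⟩
    rw [cokernelInr_mk, Submodule.Quotient.eq]
    exact ⟨(-x, 0), by simp⟩

end LinearMap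

theorem CategoryTheory.Limits.biprod.desc_comp {C : Type*} [Category C] [HasZeroMorphisms C]
    {W X Y Z : C} [HasBinaryBiproduct X Y] (f : X ⟶ W) (g : Y ⟶ W) (h : W ⟶ Z) :
    biprod.desc f g ≫ h = biprod.desc (f ≫ h) (g ≫ h) := by
  ext <;> simp

namespace ModuleCat

open Limits

variable {A : Type*} [Ring A]

theorem biprodIsoProd_inv_comp_desc {X Y Z : ModuleCat A} (f : X ⟶ Z) (g : Y ⟶ Z) :
    (biprodIsoProd X Y).inv ≫ biprod.desc f g = ofHom (f.hom.coprod g.hom) := by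
  rw [biprod.desc_eq, Preadditive.comp_add, ← Category.assoc, ← Category.assoc,
    biprodIsoProd_inv_comp_fst, biprodIsoProd_inv_comp_snd]
  ext <;> simp

theorem biprod_lift_comp_biprodIsoProd_hom {X Y Z : ModuleCat A} (f : X ⟶ Y) (g : X ⟶ Z) :
    biprod.lift f g ≫ (biprodIsoProd Y Z).hom = ofHom (f.hom.prod g.hom) := by
  rw [← Iso.eq_comp_inv]
  apply biprod.hom_ext <;> ext <;> simp

noncomputable def cokernelTriangularIso {X₁ X₂ Y₁ Y₂ : ModuleCat A}
    (u : X₁ ⟶ Y₁) (p : X₁ ⟶ Y₂) (v : X₂ ⟶ Y₂) :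
    cokernel (biprod.desc (biprod.lift u p) (biprod.lift 0 v)) ≅
      of A ((Y₁ × Y₂) ⧸ LinearMap.range (LinearMap.triangular u.hom p.hom v.hom)) :=
  have h : (biprodIsoProd X₁ X₂).inv ≫ biprod.desc (biprod.lift u p) (biprod.lift 0 v) ≫
      (biprodIsoProd Y₁ Y₂).hom = ofHom (LinearMap.triangular u.hom p.hom v.hom) := by
    rw [biprod.desc_comp, biprod_lift_comp_biprodIsoProd_hom, biprod_lift_comp_biprodIsoProd_hom,
      biprodIsoProd_inv_comp_desc]
    rfl
  (cokernelCompIsIso _ _).symm ≪≫ (cokernelEpiComp _ _).symm ≪≫ cokernelIsoOfEq h ≪≫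
    cokernelIsoRangeQuotient _

end ModuleCat

open Limits in
/-- The projective resolution `F` of `M` is encoded as `F n = G (n+1)` with `M = G 0` and
augmented differentials `δ n : G (n+1) ⟶ G n`, and `d = e + 1 ≥ 1`. -/
theorem statement3_general (A : Type) [Ring A]
    (G : ℕ → ModuleCat.{0} A) (δ : ∀ n, G (n + 1) ⟶ G n)
    (hepi : Function.Surjective (δ 0))
    (hexact : ∀ n, Function.Exact (δ (n + 1)) (δ n))
    (e : ℕ) (p : ∀ n, G (e + 2 + n) ⟶ G (n + 1))
    (hp : ∀ n, δ (e + 2 + n) ≫ p n = p (n + 1) ≫ δ (n + 1)) :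
    ∃ (α : G 0 ⟶ cokernel (biprod.desc (biprod.lift (-(δ (e + 1))) (p 0))
        (biprod.lift (0 : G 2 ⟶ G (e + 1)) (δ 1))))
      (β : cokernel (biprod.desc (biprod.lift (-(δ (e + 1))) (p 0))
        (biprod.lift (0 : G 2 ⟶ G (e + 1)) (δ 1))) ⟶ ModuleCat.of A (LinearMap.range (δ e).hom)),
      Function.Injective α ∧ Function.Surjective β ∧ Function.Exact ⇑α ⇑β := by
  have hcycles : ∀ x, (-(δ (e + 1))).hom x = 0 → (p 0).hom x ∈ LinearMap.range (δ 1).hom := by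
    intro x hx
    obtain ⟨y, rfl⟩ := (hexact (e + 1) x).1 (neg_eq_zero.1 hx)
    exact ⟨(p 1) y, congr($(hp 0) y).symm⟩
  have hexact_range : Function.Exact (-(δ (e + 1))).hom (δ e).hom.rangeRestrict :=
    LinearMap.exact_iff.2 <| by
      rw [LinearMap.ker_rangeRestrict, ModuleCat.hom_neg, LinearMap.range_neg,
        (hexact e).linearMap_ker_eq]
  let eK := ModuleCat.cokernelTriangularIso (-(δ (e + 1))) (p 0) (δ 1)
  let eM := ((hexact 0).linearEquivOfSurjective hepi).symm
  refine ⟨ModuleCat.ofHom (LinearMap.cokernelInr _ _ _ ∘ₗ eM.toLinearMap) ≫ eK.inv,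
    eK.hom ≫ ModuleCat.ofHom (LinearMap.cokernelFst _ _ _ hexact_range.linearMap_comp_eq_zero),
    ?_, ?_, ?_⟩
  · exact eK.toLinearEquiv.symm.injective.comp
      ((LinearMap.cokernelInr_injective _ _ _ hcycles).comp eM.injective)
  · exact (LinearMap.cokernelFst_surjective _ _ _ hexact_range.linearMap_comp_eq_zero
      (LinearMap.surjective_rangeRestrict _)).comp eK.toLinearEquiv.surjective
  · exact (LinearEquiv.conj_exact_iff_exact _ _ eK.toLinearEquiv.symm).2
      (LinearEquiv.precomp_exact_iff_exact.2
        (LinearMap.exact_cokernelInr_cokernelFst _ _ _ hexact_range))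

open Limits in
/-- The mapping cone of a chain map `p : Σ^{-d} F → F` representing a class in `Ext^d_A(M,M)`
yields a short exact sequence `0 → M → K_p → Ω^{d-1}_A(M) → 0`.  Here the projective
resolution `F` of `M` is encoded as `F n = G (n+1)` with `M = G 0` and augmented differentials
`δ n : G (n+1) ⟶ G n`, and `d = e + 1 ≥ 1`. -/
theorem statement3 (A : Type) [Ring A]
    (G : ℕ → ModuleCat.{0} A) (δ : ∀ n, G (n + 1) ⟶ G n)
    (hproj : ∀ n, Projective (G (n + 1)))
    (hepi : Function.Surjective (δ 0))
    (hexact : ∀ n, Function.Exact (δ (n + 1)) (δ n))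
    (e : ℕ) (p : ∀ n, G (e + 2 + n) ⟶ G (n + 1))
    (hp : ∀ n, δ (e + 2 + n) ≫ p n = p (n + 1) ≫ δ (n + 1)) :
    ∃ (α : G 0 ⟶ cokernel (biprod.desc (biprod.lift (-(δ (e + 1))) (p 0))
        (biprod.lift (0 : G 2 ⟶ G (e + 1)) (δ 1))))
      (β : cokernel (biprod.desc (biprod.lift (-(δ (e + 1))) (p 0))
        (biprod.lift (0 : G 2 ⟶ G (e + 1)) (δ 1))) ⟶ ModuleCat.of A (LinearMap.range (δ e).hom)),
      Function.Injective α ∧ Function.Surjective β ∧ Function.Exact ⇑α ⇑β :=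
  statement3_general A G δ hepi hexact e p hp
end

section
/- Let Q be a regular local ring with maximal ideal n, I ⊆ n² an ideal generated by a Q-regular sequence, and J ⊆ I an ideal generated by a Q-regular sequence whose images in I/nI are linearly independent over the residue field k. Then J ∩ nI = nJ, and consequently the natural map J/nJ → I/nI is injective. -/
set_option linter.unnecessarySimpa false
set_option maxHeartbeats 1000000

open CategoryTheory IsLocalRing

section

variable {R M ι : Type*} [CommRing R] [AddCommGroup M] [Module R M] [Fintype ι]
  {𝔪 : Ideal R} {N : Submodule R M} {g : ι → M}

theorem Submodule.mem_smul_span_range_of_mem_smul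
    (hli : ∀ a : ι → R, ∑ i, a i • g i ∈ 𝔪 • N → ∀ i, a i ∈ 𝔪) {x : M}
    (hx : x ∈ span R (Set.range g)) (hxN : x ∈ 𝔪 • N) : x ∈ 𝔪 • span R (Set.range g) := by
  obtain ⟨a, rfl⟩ := mem_span_range_iff_exists_fun R |>.mp hx
  exact sum_mem fun i _ => smul_mem_smul (hli a hxN i) (subset_span ⟨i, rfl⟩)

theorem Submodule.span_range_inf_smul_eq (hgN : ∀ i, g i ∈ N)
    (hli : ∀ a : ι → R, ∑ i, a i • g i ∈ 𝔪 • N → ∀ i, a i ∈ 𝔪) :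
    span R (Set.range g) ⊓ 𝔪 • N = 𝔪 • span R (Set.range g) :=
  le_antisymm (fun _ hx => mem_smul_span_range_of_mem_smul hli hx.1 hx.2) <|
    le_inf smul_le_right <| smul_mono_right _ <| span_le.mpr <| Set.range_subset_iff.mpr hgN

end

theorem statement4_general (Q : Type) [CommRing Q] [IsLocalRing Q]
    (I : Ideal Q)
    (r : ℕ) (g : Fin r → Q) (hgI : ∀ i, g i ∈ I)
    (J : Ideal Q) (hJ : J = Ideal.span (Set.range g))
    (hli : ∀ a : Fin r → Q, (∑ i, a i * g i) ∈ maximalIdeal Q • I →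
      ∀ i, a i ∈ maximalIdeal Q) :
    J ⊓ (maximalIdeal Q • I) = maximalIdeal Q • J ∧
      ∀ x ∈ J, x ∈ maximalIdeal Q • I → x ∈ maximalIdeal Q • J := by
  subst hJ
  have hli' : ∀ a : Fin r → Q, ∑ i, a i • g i ∈ maximalIdeal Q • I → ∀ i, a i ∈ maximalIdeal Q :=
    by simpa only [smul_eq_mul] using hli
  exact ⟨Submodule.span_range_inf_smul_eq hgI hli',
    fun _ hx hxI => Submodule.mem_smul_span_range_of_mem_smul hli' hx hxI⟩

/-- If `J ⊆ I` is generated by a regular sequence whose images in `I/𝔫I` are linearly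
independent, then `J ∩ 𝔫I = 𝔫J`; consequently the natural map `J/𝔫J → I/𝔫I` is injective. -/
theorem statement4 (Q : Type) [CommRing Q] [IsLocalRing Q] (hQ : IsRegularLocal Q)
    (c : ℕ) (f : Fin c → Q) (hfreg : RingTheory.Sequence.IsRegular Q (List.ofFn f))
    (I : Ideal Q) (hI : I = Ideal.span (Set.range f)) (hI2 : I ≤ maximalIdeal Q ^ 2)
    (r : ℕ) (g : Fin r → Q) (hgI : ∀ i, g i ∈ I)
    (hgreg : RingTheory.Sequence.IsRegular Q (List.ofFn g))
    (J : Ideal Q) (hJ : J = Ideal.span (Set.range g))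
    (hli : ∀ a : Fin r → Q, (∑ i, a i * g i) ∈ maximalIdeal Q • I →
      ∀ i, a i ∈ maximalIdeal Q) :
    J ⊓ (maximalIdeal Q • I) = maximalIdeal Q • J ∧
      ∀ x ∈ J, x ∈ maximalIdeal Q • I → x ∈ maximalIdeal Q • J :=
  statement4_general Q I r g hgI J hJ hli
end
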